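/- Let H_n(x) = Σ_{k ≥ 0} H_n^k x^k where H_n^k = Σ_{j ≥ 0} M(n,j) C(n-2j, k-j). Then as formal power series in t and x, Σ_{n ≥ 0} t^n H_n(x) = 1 / (1 - t - xt - xt²). -/

import Mathlib

/-!
Summing over `j` first, `Σ_k C(n-2j, k-j) x^k = x^j (1+x)^(n-2j)`, so
`H_n(x) = Σ_j M(n,j) x^j (1+x)^(n-2j)`. Splitting matchings of the path on `n + 2` vertices
according to whether they use the last edge gives `M(n+2, j+1) = M(n+1, j+1) + M(n, j)`, which
turns into `H_{n+2} = (1+x) H_{n+1} + x H_n` with `H_0 = 1`, `H_1 = 1 + x`; this recurrence is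
the statement that the generating function is `1 / (1 - (1+x)t - xt²)`.
-/

/-- The set of matchings of size `j` in the path graph on `n` vertices:
edges are indexed `0, …, n-2`, and a matching is a set of edge indices
pairwise differing by at least 2 (pairwise vertex-disjoint edges). -/
def pathMatchings (n j : ℕ) : Finset (Finset ℕ) :=
  ((Finset.range (n - 1)).powersetCard j).filter
    (fun s => ∀ a ∈ s, ∀ b ∈ s, a ≠ b → a + 2 ≤ b ∨ b + 2 ≤ a)

/-- `M n j` = number of matchings of size `j` in the path graph `P_n`. -/
def M (n j : ℕ) : ℕ := (pathMatchings n j).card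

/-- `H n k = Σ_{j ≥ 0} M(n,j) · C(n-2j, k-j)`.  Since `C(n-2j, k-j) = 0`
for `j > k`, the sum may be truncated at `j = k`. -/
def H (n k : ℕ) : ℕ := ∑ j ∈ Finset.range (k + 1), M n j * Nat.choose (n - 2 * j) (k - j)

open Finset

lemma mem_pathMatchings {n j : ℕ} {s : Finset ℕ} :
    s ∈ pathMatchings n j ↔ (∀ a ∈ s, a + 2 ≤ n) ∧ s.card = j ∧
      (∀ a ∈ s, ∀ b ∈ s, a ≠ b → a + 2 ≤ b ∨ b + 2 ≤ a) := by
  simp only [pathMatchings, mem_filter, mem_powersetCard, subset_iff, mem_range]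
  constructor
  · rintro ⟨⟨hlt, hcard⟩, hsep⟩
    exact ⟨fun a ha => by have := hlt ha; omega, hcard, hsep⟩
  · rintro ⟨hle, hcard, hsep⟩
    exact ⟨⟨fun {a} ha => by have := hle a ha; omega, hcard⟩, hsep⟩

lemma M_zero_right (n : ℕ) : M n 0 = 1 := by
  have : pathMatchings n 0 = {∅} := by
    ext s
    simp only [mem_pathMatchings, card_eq_zero, mem_singleton]
    exact ⟨fun h => h.2.1, by rintro rfl; simp⟩
  simp [M, this]

/-- Halving is injective on a matching, since its edge indices are pairwise at least 2 apart. -/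
lemma two_mul_le_of_mem_pathMatchings {n j : ℕ} {s : Finset ℕ} (hs : s ∈ pathMatchings n j) :
    2 * j ≤ n := by
  obtain ⟨hle, rfl, hsep⟩ := mem_pathMatchings.mp hs
  have : s.card ≤ (range (n / 2)).card := by
    refine card_le_card_of_injOn (· / 2) (fun a ha => ?_) (fun a ha b hb hab => ?_)
    · have := hle a ha
      simp only [coe_range, Set.mem_Iio]
      omega
    · by_contra hne
      have := hsep a ha b hb hne
      simp only at hab
      omega
  rw [card_range] at this
  omega

lemma M_eq_zero_of_lt {n j : ℕ} (h : n < 2 * j) : M n j = 0 := by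
  rw [M, card_eq_zero, eq_empty_iff_forall_notMem]
  intro s hs
  have := two_mul_le_of_mem_pathMatchings hs
  omega

lemma erase_mem_pathMatchings {n j : ℕ} {s : Finset ℕ} (hs : s ∈ pathMatchings (n + 2) (j + 1))
    (hn : n ∈ s) : s.erase n ∈ pathMatchings n j := by
  obtain ⟨hle, hcard, hsep⟩ := mem_pathMatchings.mp hs
  refine mem_pathMatchings.mpr ⟨fun a ha => ?_, by simp [card_erase_of_mem hn, hcard],
    fun a ha b hb => hsep a (mem_of_mem_erase ha) b (mem_of_mem_erase hb)⟩
  have := hle a (mem_of_mem_erase ha)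
  have := hsep a (mem_of_mem_erase ha) n hn (ne_of_mem_erase ha)
  omega

lemma insert_mem_pathMatchings {n j : ℕ} {s : Finset ℕ} (hs : s ∈ pathMatchings n j) :
    insert n s ∈ pathMatchings (n + 2) (j + 1) := by
  obtain ⟨hle, hcard, hsep⟩ := mem_pathMatchings.mp hs
  have hns : n ∉ s := fun h => by have := hle n h; omega
  refine mem_pathMatchings.mpr ⟨?_, by rw [card_insert_of_notMem hns, hcard], ?_⟩
  · simp only [mem_insert, forall_eq_or_imp, le_refl, true_and]
    exact fun a ha => by have := hle a ha; omega
  · simp only [mem_insert, forall_eq_or_imp]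
    refine ⟨⟨fun h => absurd rfl h, fun b hb _ => ?_⟩, fun a ha => ⟨fun _ => ?_, hsep a ha⟩⟩
    · have := hle b hb; omega
    · have := hle a ha; omega

lemma M_add_two_succ (n j : ℕ) : M (n + 2) (j + 1) = M (n + 1) (j + 1) + M n j := by
  rw [M, ← card_filter_add_card_filter_not (fun s => n ∉ s)]
  congr 1
  · rw [M]
    congr 1
    ext s
    simp only [mem_filter, mem_pathMatchings]
    constructor
    · rintro ⟨⟨hle, hcard, hsep⟩, hns⟩
      refine ⟨fun a ha => ?_, hcard, hsep⟩
      have := hle a ha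
      have : a ≠ n := by rintro rfl; exact hns ha
      omega
    · rintro ⟨hle, hcard, hsep⟩
      exact ⟨⟨fun a ha => by have := hle a ha; omega, hcard, hsep⟩,
        fun h => by have := hle n h; omega⟩
  · simp only [not_not]
    refine card_bij' (fun s _ => s.erase n) (fun s _ => insert n s)
      (fun s hs => erase_mem_pathMatchings (mem_filter.mp hs).1 (mem_filter.mp hs).2)
      (fun s hs => mem_filter.mpr ⟨insert_mem_pathMatchings hs, mem_insert_self n s⟩)
      (fun s hs => insert_erase (mem_filter.mp hs).2) (fun s hs => erase_insert ?_)
    obtain ⟨hle, -, -⟩ := mem_pathMatchings.mp hs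
    exact fun h => by have := hle n h; omega

lemma two_mul_le_or_M_eq_zero (n j : ℕ) : 2 * j ≤ n ∨ M n j = 0 :=
  (le_or_gt (2 * j) n).imp_right M_eq_zero_of_lt

lemma H_eq_zero_of_lt {n k : ℕ} (h : n < k) : H n k = 0 := by
  refine sum_eq_zero fun j _ => ?_
  rcases two_mul_le_or_M_eq_zero n j with hj | hj
  · rw [Nat.choose_eq_zero_of_lt (by omega), mul_zero]
  · rw [hj, zero_mul]

open Polynomial

noncomputable def Hpoly (R : Type*) [CommSemiring R] (n : ℕ) : R[X] :=
  ∑ j ∈ range (n + 1), (M n j : R[X]) * X ^ j * (1 + X) ^ (n - 2 * j)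

section

variable {R : Type*} [CommSemiring R]

lemma coeff_Hpoly (n k : ℕ) : (Hpoly R n).coeff k = H n k := by
  have hsub : (range (n + 1)).filter (· ≤ k) ⊆ range (k + 1) := fun j hj => by
    simp only [mem_filter, mem_range] at hj ⊢; omega
  simp only [Hpoly, finsetSum_coeff, mul_assoc, coeff_natCast_mul, coeff_X_pow_mul',
    coeff_one_add_X_pow, mul_ite, mul_zero, ← sum_filter, H, Nat.cast_sum, Nat.cast_mul]
  refine sum_subset hsub fun j hj hj' => ?_
  simp only [mem_filter, mem_range, not_and, not_le] at hj hj'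
  rw [M_eq_zero_of_lt (by omega), Nat.cast_zero, zero_mul]

lemma sum_C_H_mul_X_pow (n : ℕ) :
    ∑ k ∈ range (n + 1), C (H n k : R) * X ^ k = Hpoly R n := by
  ext k
  simp only [finsetSum_coeff, coeff_C_mul_X_pow, sum_ite_eq, mem_range, coeff_Hpoly]
  split_ifs with hk
  · rfl
  · rw [H_eq_zero_of_lt (by omega), Nat.cast_zero]

lemma Hpoly_zero : Hpoly R 0 = 1 := by
  simp [Hpoly, M_zero_right]

lemma Hpoly_one : Hpoly R 1 = 1 + X := by
  simp [Hpoly, sum_range_succ, M_zero_right, M_eq_zero_of_lt]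

lemma Hpoly_eq_sum_range {n N : ℕ} (hN : n < N) :
    Hpoly R n = ∑ j ∈ range N, (M n j : R[X]) * X ^ j * (1 + X) ^ (n - 2 * j) := by
  refine sum_subset (range_subset_range.mpr hN) fun j _ hj => ?_
  rw [mem_range] at hj
  rw [M_eq_zero_of_lt (by omega), Nat.cast_zero, zero_mul, zero_mul]

lemma Hpoly_add_two (n : ℕ) :
    Hpoly R (n + 2) = (1 + X) * Hpoly R (n + 1) + X * Hpoly R n := by
  rw [Hpoly_eq_sum_range (N := n + 3) (by omega), Hpoly_eq_sum_range (N := n + 3) (by omega),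
    Hpoly_eq_sum_range (N := n + 2) (by omega), mul_sum, mul_sum, sum_range_succ',
    sum_range_succ' (fun j => (1 + X) * ((M (n + 1) j : R[X]) * X ^ j * _)), add_right_comm,
    ← sum_add_distrib]
  congr 1
  · refine sum_congr rfl fun j _ => ?_
    rw [M_add_two_succ, show n + 2 - 2 * (j + 1) = n - 2 * j by omega]
    rcases two_mul_le_or_M_eq_zero (n + 1) (j + 1) with hj | hj
    · rw [show n - 2 * j = n + 1 - 2 * (j + 1) + 1 by omega, pow_succ]
      push_cast
      ring
    · simp only [hj, zero_add]
      ring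
  · simp [M_zero_right, pow_succ]
    ring

end

theorem PowerSeries.mul_mk_eq_one_of_recurrence {S : Type*} [CommRing S] (b c : S) {p : ℕ → S}
    (h0 : p 0 = 1) (h1 : p 1 = b) (hrec : ∀ n, p (n + 2) = b * p (n + 1) + c * p n) :
    (1 - PowerSeries.C b * PowerSeries.X - PowerSeries.C c * PowerSeries.X ^ 2) *
      PowerSeries.mk p = 1 := by
  ext n
  rcases n with _ | _ | n <;>
    simp [sub_mul, mul_assoc, PowerSeries.coeff_X_pow_mul', PowerSeries.coeff_one, h0, h1, hrec]

open PowerSeries in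
/-- `(1 - t - xt - xt²) · Σ_{n ≥ 0} t^n H_n(x) = 1` as a formal power series in `t`
with coefficients in `ℚ[x]`, where `H_n(x) = Σ_k H_n^k x^k`. -/
theorem H_generating_function :
    (1 - PowerSeries.X - PowerSeries.C (Polynomial.X : Polynomial ℚ) * PowerSeries.X
        - PowerSeries.C (Polynomial.X : Polynomial ℚ) * PowerSeries.X ^ 2) *
      PowerSeries.mk (fun n => ∑ k ∈ Finset.range (n + 1),
        Polynomial.C (H n k : ℚ) * Polynomial.X ^ k) = 1 := by
  have hlin : (1 : ℚ[X]⟦X⟧) - PowerSeries.X - PowerSeries.C Polynomial.X * PowerSeries.X =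
      1 - PowerSeries.C (1 + Polynomial.X) * PowerSeries.X := by
    rw [map_add, map_one]
    ring
  simp only [sum_C_H_mul_X_pow, hlin]
  exact PowerSeries.mul_mk_eq_one_of_recurrence _ _ Hpoly_zero Hpoly_one Hpoly_add_two
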